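/- arXiv:2303.05786 — 3 statements merged into one kernel-verified Lean document; each statement's English description precedes it below -/
import Mathlib

section
/- Let Φ be a q×m random matrix with entries drawn i.i.d. from N(0, 1/q). Then for the matrix A = Φ^T Φ Φ^T Φ, the expectation satisfies E[A_{ii}] = (m+1)/q + 1 for every diagonal entry i, and E[A_{ij}] = 0 for all i ≠ j. -/
open MeasureTheory Real ProbabilityTheory
open scoped NNReal ENNReal


lemma intg {b : ℝ} (hb : 0 < b) (n : ℕ) :
    Integrable (fun x : ℝ => x ^ n * Real.exp (-b * x ^ 2)) := by
  have h := integrable_rpow_mul_exp_neg_mul_sq hb (s := (n : ℝ))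
    (by exact_mod_cast neg_one_lt_zero.trans_le (Nat.cast_nonneg n))
  simpa [Real.rpow_natCast] using h
lemma gauss_rec {b : ℝ} (hb : 0 < b) (n : ℕ) :
    ∫ x : ℝ, x ^ (n + 2) * Real.exp (-b * x ^ 2) =
      ((n : ℝ) + 1) / (2 * b) * ∫ x : ℝ, x ^ n * Real.exp (-b * x ^ 2) := by
  have hu : ∀ x : ℝ, HasDerivAt (fun x : ℝ => x ^ (n + 1))
      (((n : ℝ) + 1) * x ^ n) x := by
    intro x
    simpa using hasDerivAt_pow (n + 1) x
  have hv : ∀ x : ℝ, HasDerivAt (fun x : ℝ => -(2 * b)⁻¹ * Real.exp (-b * x ^ 2))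
      (x * Real.exp (-b * x ^ 2)) x := by
    intro x
    have h1 : HasDerivAt (fun x : ℝ => -b * x ^ 2) (-b * (2 * x)) x :=
      (hasDerivAt_pow 2 x).const_mul (-b) |>.congr_deriv (by ring)
    have h2 := (h1.exp).const_mul (-(2 * b)⁻¹)
    refine h2.congr_deriv ?_
    have hb0 : b ≠ 0 := hb.ne'
    field_simp
  have key := integral_mul_deriv_eq_deriv_mul_of_integrable (fun x _ => hu x) (fun x _ => hv x) ?_ ?_ ?_
  · have e1 : ∀ x : ℝ, x ^ (n + 1) * (x * Real.exp (-b * x ^ 2)) =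
        x ^ (n + 2) * Real.exp (-b * x ^ 2) := fun x => by ring
    have e2 : ∀ x : ℝ, ((n : ℝ) + 1) * x ^ n * (-(2 * b)⁻¹ * Real.exp (-b * x ^ 2)) =
        (-(((n : ℝ) + 1) / (2 * b))) * (x ^ n * Real.exp (-b * x ^ 2)) := fun x => by
      field_simp
    simp only [e1, e2] at key
    rw [key, integral_const_mul]
    ring
  · exact (intg hb (n + 2)).congr (by
      filter_upwards with x; dsimp [Pi.mul_apply]; ring)
  · have := (intg hb n).const_mul (-(((n : ℝ) + 1) / (2 * b)))
    exact this.congr (by filter_upwards with x; dsimp [Pi.mul_apply]; field_simp)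
  · have := (intg hb (n + 1)).const_mul (-(2 * b)⁻¹)
    exact this.congr (by filter_upwards with x; dsimp [Pi.mul_apply]; ring)


lemma gauss_odd1 {b : ℝ} : ∫ x : ℝ, x ^ 1 * Real.exp (-b * x ^ 2) = 0 := by
  have h := MeasureTheory.integral_map_equiv (μ := (volume : Measure ℝ))
      (Homeomorph.neg ℝ).toMeasurableEquiv (fun x => x * Real.exp (-b * x ^ 2))
  rw [show ⇑(Homeomorph.neg ℝ).toMeasurableEquiv = (Neg.neg : ℝ → ℝ) from rfl,
    Measure.map_neg_eq_self] at h
  simp only [neg_sq, neg_mul, integral_neg] at h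
  simp only [pow_one, neg_mul]
  linarith

lemma integral_fun_gaussianReal {v : ℝ≥0} (hv : v ≠ 0) (g : ℝ → ℝ) :
    ∫ x, g x ∂(gaussianReal 0 v) =
      ∫ x, gaussianPDFReal 0 v x * g x := by
  rw [gaussianReal_of_var_ne_zero 0 hv]
  have hmeas : Measurable (fun x => (gaussianPDFReal 0 v x).toNNReal) :=
    (measurable_gaussianPDFReal 0 v).real_toNNReal
  have h2 : (gaussianPDF 0 v) =
      fun x => ((gaussianPDFReal 0 v x).toNNReal : ℝ≥0∞) := rfl
  rw [h2, integral_withDensity_eq_integral_smul hmeas]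
  congr 1
  funext x
  rw [NNReal.smul_def, smul_eq_mul, Real.coe_toNNReal _
    (gaussianPDFReal_nonneg 0 v x)]

lemma gaussianPDFReal_mul_pow {v : ℝ≥0} (x : ℝ) (n : ℕ) :
    gaussianPDFReal 0 v x * x ^ n =
      (Real.sqrt (2 * π * v))⁻¹ * (x ^ n * Real.exp (-(2 * (v : ℝ))⁻¹ * x ^ 2)) := by
  rw [gaussianPDFReal]
  have : -(x - 0) ^ 2 / (2 * (v : ℝ)) = -(2 * (v : ℝ))⁻¹ * x ^ 2 := by
    ring
  rw [this]; ring

lemma gaussianReal_integrable_pow {v : ℝ≥0} (hv : v ≠ 0) (n : ℕ) :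
    Integrable (fun x : ℝ => x ^ n) (gaussianReal 0 v) := by
  rw [gaussianReal_of_var_ne_zero 0 hv]
  have hmeas : Measurable (fun x => (gaussianPDFReal 0 v x).toNNReal) :=
    (measurable_gaussianPDFReal 0 v).real_toNNReal
  have h2 : (gaussianPDF 0 v) = fun x => ((gaussianPDFReal 0 v x).toNNReal : ℝ≥0∞) := rfl
  rw [h2, integrable_withDensity_iff_integrable_smul hmeas]
  have hvpos : (0 : ℝ) < v := NNReal.coe_pos.mpr (pos_iff_ne_zero.mpr hv)
  have hb : 0 < (2 * (v : ℝ))⁻¹ := by positivity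
  have h3 := (intg hb n).const_mul (Real.sqrt (2 * π * v))⁻¹
  refine h3.congr ?_
  filter_upwards with x
  rw [NNReal.smul_def, smul_eq_mul, Real.coe_toNNReal _ (gaussianPDFReal_nonneg 0 v x)]
  exact (gaussianPDFReal_mul_pow x n).symm

lemma gaussianReal_moments {v : ℝ≥0} (hv : v ≠ 0) :
    (∫ x, x ^ 1 ∂(gaussianReal 0 v)) = 0 ∧
    (∫ x, x ^ 2 ∂(gaussianReal 0 v)) = v ∧
    (∫ x, x ^ 3 ∂(gaussianReal 0 v)) = 0 ∧
    (∫ x, x ^ 4 ∂(gaussianReal 0 v)) = 3 * (v : ℝ) ^ 2 := by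
  have hvpos : (0 : ℝ) < v := NNReal.coe_pos.mpr (pos_iff_ne_zero.mpr hv)
  have hb : 0 < (2 * (v : ℝ))⁻¹ := by positivity
  have hM : ∀ n : ℕ, (∫ x, x ^ n ∂(gaussianReal 0 v)) =
      (Real.sqrt (2 * π * v))⁻¹ *
        ∫ x : ℝ, x ^ n * Real.exp (-(2 * (v : ℝ))⁻¹ * x ^ 2) := by
    intro n
    rw [integral_fun_gaussianReal hv]
    simp_rw [gaussianPDFReal_mul_pow]
    rw [integral_const_mul]
  have hC : (Real.sqrt (2 * π * v))⁻¹ *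
      (∫ x : ℝ, x ^ 0 * Real.exp (-(2 * (v : ℝ))⁻¹ * x ^ 2)) = 1 := by
    rw [← hM 0]
    have h1 := integral_gaussianPDFReal_eq_one 0 hv
    simpa using h1
  have hJ1 : ∫ x : ℝ, x ^ 1 * Real.exp (-(2 * (v : ℝ))⁻¹ * x ^ 2) = 0 := gauss_odd1
  have h2b : ((0:ℕ) + 1 : ℝ) / (2 * (2 * (v : ℝ))⁻¹) = (v : ℝ) := by
    field_simp
    simp
  have h4b : ((2:ℕ) + 1 : ℝ) / (2 * (2 * (v : ℝ))⁻¹) = 3 * (v : ℝ) := by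
    field_simp; ring
  have hJ2 := gauss_rec hb 0
  rw [h2b] at hJ2
  have hJ3 := gauss_rec hb 1
  rw [hJ1] at hJ3
  have hJ4 := gauss_rec hb 2
  rw [h4b] at hJ4
  have hM2 : (∫ x, x ^ 2 ∂(gaussianReal 0 v)) = v := by
    rw [hM 2, hJ2, ← mul_assoc, mul_comm _ (v:ℝ), mul_assoc, hC, mul_one]
  refine ⟨by rw [hM 1, hJ1, mul_zero], hM2, by rw [hM 3, hJ3]; simp, ?_⟩
  rw [hM 4, hJ4, ← mul_assoc, mul_comm _ (3 * (v:ℝ)), mul_assoc, ← hM 2, hM2]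
  ring

lemma sum_helper {n : ℕ} (a : Fin n) (P Q : ℝ) :
    ∑ k : Fin n, (if k = a then P else Q) = P + ((n : ℝ) - 1) * Q := by
  have h : ∀ k : Fin n, (if k = a then P else Q) = (if k = a then P - Q else 0) + Q := by
    intro k; by_cases h : k = a <;> simp [h]
  simp_rw [h, Finset.sum_add_distrib, Finset.sum_ite_eq' Finset.univ a fun _ => P - Q]
  simp [Finset.card_univ]
  ring

lemma diag_sum (q m : ℕ) (hq : 0 < q) (i : Fin m) (vr : ℝ) (hvr : vr = (q : ℝ)⁻¹) :
    ∑ a : Fin q, ∑ l : Fin m, ∑ k : Fin q,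
      (if k = a then (if l = i then 3 * vr ^ 2 else vr ^ 2)
        else (if l = i then vr else 0) * (if l = i then vr else 0)) =
      ((m : ℝ) + 1) / q + 1 := by
  have hk : ∀ (a : Fin q) (l : Fin m),
      (∑ k : Fin q, (if k = a then (if l = i then 3 * vr ^ 2 else vr ^ 2)
        else (if l = i then vr else 0) * (if l = i then vr else 0))) =
      (if l = i then 3 * vr ^ 2 + ((q : ℝ) - 1) * (vr * vr)
        else vr ^ 2 + ((q : ℝ) - 1) * 0) := by
    intro a l
    rw [sum_helper]
    split_ifs <;> ring
  simp_rw [hk]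
  have hl : (∑ l : Fin m, (if l = i then 3 * vr ^ 2 + ((q : ℝ) - 1) * (vr * vr)
      else vr ^ 2 + ((q : ℝ) - 1) * 0)) =
      (3 * vr ^ 2 + ((q : ℝ) - 1) * (vr * vr)) + ((m : ℝ) - 1) * (vr ^ 2 + ((q : ℝ) - 1) * 0) := by
    rw [sum_helper]
  simp_rw [hl, Finset.sum_const, Finset.card_univ, Fintype.card_fin, nsmul_eq_mul]
  have hq0 : (q : ℝ) ≠ 0 := Nat.cast_ne_zero.mpr hq.ne'
  rw [hvr]
  field_simp
  ring

open Matrix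

/-- If `Φ` is a `q × m` random matrix with entries i.i.d.
Gaussian with mean `0` and variance `1/q`, then `A = Φᵀ Φ Φᵀ Φ` satisfies
`E[A i i] = (m + 1)/q + 1` and `E[A i j] = 0` for `i ≠ j`. -/
theorem expectation_fourth_moment_matrix
    {Ω : Type*} [MeasurableSpace Ω] (μ : Measure Ω) [IsProbabilityMeasure μ]
    (q m : ℕ) (hq : 0 < q)
    (Φ : Ω → Matrix (Fin q) (Fin m) ℝ)
    (hmeas : ∀ i j, Measurable (fun ω => Φ ω i j))
    (hindep : iIndepFun (m := fun _ : Fin q × Fin m => (inferInstance : MeasurableSpace ℝ))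
      (fun p ω => Φ ω p.1 p.2) μ)
    (hlaw : ∀ i j, μ.map (fun ω => Φ ω i j) = gaussianReal 0 ((q : NNReal)⁻¹)) :
    (∀ i, (∫ ω, ((Φ ω)ᵀ * Φ ω * (Φ ω)ᵀ * Φ ω) i i ∂μ) = ((m : ℝ) + 1) / q + 1) ∧
      ∀ i j, i ≠ j → (∫ ω, ((Φ ω)ᵀ * Φ ω * (Φ ω)ᵀ * Φ ω) i j ∂μ) = 0 := by
  classical
  set X : Fin q × Fin m → Ω → ℝ := fun p ω => Φ ω p.1 p.2 with hXdef
  have hXmeas : ∀ p, Measurable (X p) := fun p => hmeas p.1 p.2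
  have hv : ((q : NNReal)⁻¹) ≠ 0 := by
    simp [hq.ne']
  set vr : ℝ := (q : ℝ)⁻¹ with hvr
  have hvrc : (((q : NNReal)⁻¹ : NNReal) : ℝ) = vr := by
    rw [hvr]; push_cast; rfl
  have hlaw' : ∀ p : Fin q × Fin m, μ.map (X p) = gaussianReal 0 ((q : NNReal)⁻¹) :=
    fun p => hlaw p.1 p.2
  have hint : ∀ (p) (n : ℕ), Integrable (fun ω => X p ω ^ n) μ := by
    intro p n
    have h1 := gaussianReal_integrable_pow hv n
    rw [← hlaw' p] at h1
    exact (integrable_map_measure (measurable_id.pow_const n).aestronglyMeasurable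
      (hXmeas p).aemeasurable).mp h1
  have hmom : ∀ (p) (n : ℕ), (∫ ω, X p ω ^ n ∂μ) =
      ∫ x, x ^ n ∂(gaussianReal 0 ((q : NNReal)⁻¹)) := by
    intro p n
    rw [← hlaw' p]
    exact (integral_map (φ := X p) (f := fun x : ℝ => x ^ n) (hXmeas p).aemeasurable
      (measurable_id.pow_const n).aestronglyMeasurable).symm
  obtain ⟨g1, g2, g3, g4⟩ := gaussianReal_moments hv
  have hm1 : ∀ p, (∫ ω, X p ω ^ 1 ∂μ) = 0 := fun p => by rw [hmom, g1]
  have hm2 : ∀ p, (∫ ω, X p ω ^ 2 ∂μ) = vr := fun p => by rw [hmom, g2, hvrc]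
  have hm3 : ∀ p, (∫ ω, X p ω ^ 3 ∂μ) = 0 := fun p => by rw [hmom, g3]
  have hm4 : ∀ p, (∫ ω, X p ω ^ 4 ∂μ) = 3 * vr ^ 2 := fun p => by rw [hmom, g4, hvrc]
  have hpairInd : ∀ (a b) (s t : ℕ), a ≠ b →
      IndepFun (fun ω => X a ω ^ s) (fun ω => X b ω ^ t) μ := by
    intro a b s t hab
    exact (hindep.indepFun hab).comp (measurable_id.pow_const s) (measurable_id.pow_const t)
  have hpairInt : ∀ (a b) (s t : ℕ), a ≠ b →
      Integrable (fun ω => X a ω ^ s * X b ω ^ t) μ := by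
    intro a b s t hab
    exact (hpairInd a b s t hab).integrable_mul (hint a s) (hint b t)
  have hpairE : ∀ (a b) (s t : ℕ), a ≠ b →
      (∫ ω, X a ω ^ s * X b ω ^ t ∂μ) = (∫ ω, X a ω ^ s ∂μ) * (∫ ω, X b ω ^ t ∂μ) := by
    intro a b s t hab
    exact (hpairInd a b s t hab).integral_mul_eq_mul_integral (hint a s).aestronglyMeasurable (hint b t).aestronglyMeasurable
  have prodInt : ∀ a b, Integrable (fun ω => X a ω * X b ω) μ := by
    intro a b
    by_cases hab : a = b
    · subst hab
      exact (hint a 2).congr (by filter_upwards with ω; rw [pow_two])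
    · exact (hpairInt a b 1 1 hab).congr (by filter_upwards with ω; rw [pow_one, pow_one])
  have prodE : ∀ a b, (∫ ω, X a ω * X b ω ∂μ) = if a = b then vr else 0 := by
    intro a b
    by_cases hab : a = b
    · subst hab
      rw [if_pos rfl, ← hm2 a]
      congr 1; funext ω; rw [pow_two]
    · rw [if_neg hab]
      have h := hpairE a b 1 1 hab
      have h1 := hm1 a
      simp only [pow_one] at h h1
      rw [h, h1, zero_mul]
  have hgroup : ∀ a b c d, a ≠ c → a ≠ d → b ≠ c → b ≠ d →
      IndepFun (fun ω => X a ω * X b ω) (fun ω => X c ω * X d ω) μ := by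
    intro a b c d hac had hbc hbd
    exact hindep.indepFun_mul_mul hXmeas a b c d hac had hbc hbd
  have hgroupInt : ∀ a b c d, a ≠ c → a ≠ d → b ≠ c → b ≠ d →
      Integrable (fun ω => X a ω * X b ω * (X c ω * X d ω)) μ :=
    fun a b c d hac had hbc hbd =>
      (hgroup a b c d hac had hbc hbd).integrable_mul (prodInt a b) (prodInt c d)
  have hgroupE : ∀ a b c d, a ≠ c → a ≠ d → b ≠ c → b ≠ d →
      (∫ ω, X a ω * X b ω * (X c ω * X d ω) ∂μ) =
        (if a = b then vr else 0) * (if c = d then vr else 0) := by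
    intro a b c d hac had hbc hbd
    have h := (hgroup a b c d hac had hbc hbd).integral_mul_eq_mul_integral
      (prodInt a b).aestronglyMeasurable (prodInt c d).aestronglyMeasurable
    rw [prodE, prodE] at h
    exact h
  have htripInd : ∀ a b c, a ≠ c → b ≠ c →
      IndepFun (fun ω => X a ω * X b ω) (fun ω => X c ω ^ 2) μ := by
    intro a b c hac hbc
    exact (hindep.indepFun_mul_left hXmeas a b c hac hbc).comp measurable_id
      (measurable_id.pow_const 2)
  have htripInt : ∀ a b c, a ≠ c → b ≠ c →
      Integrable (fun ω => X a ω * X b ω * X c ω ^ 2) μ :=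
    fun a b c hac hbc => (htripInd a b c hac hbc).integrable_mul (prodInt a b) (hint c 2)
  have htripE : ∀ a b c, a ≠ b → a ≠ c → b ≠ c →
      (∫ ω, X a ω * X b ω * X c ω ^ 2 ∂μ) = 0 := by
    intro a b c hab hac hbc
    have h := (htripInd a b c hac hbc).integral_mul_eq_mul_integral (prodInt a b).aestronglyMeasurable (hint c 2).aestronglyMeasurable
    rw [prodE, if_neg hab, zero_mul] at h
    exact h
  have hterm : ∀ (k a : Fin q) (i l j : Fin m),
      Integrable (fun ω => X (k, i) ω * X (k, l) ω * (X (a, l) ω * X (a, j) ω)) μ ∧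
      (∫ ω, X (k, i) ω * X (k, l) ω * (X (a, l) ω * X (a, j) ω) ∂μ) =
        (if k = a then
          (if l = i then (if l = j then 3 * vr ^ 2 else 0)
            else (if l = j then 0 else (if i = j then vr ^ 2 else 0)))
          else (if l = i then vr else 0) * (if l = j then vr else 0)) := by
    intro k a i l j
    by_cases hka : k = a
    · subst hka
      rw [if_pos rfl]
      by_cases hli : l = i
      · subst hli
        by_cases hlj : l = j
        · subst hlj
          rw [if_pos rfl, if_pos rfl]
          have he : (fun ω => X (k, l) ω * X (k, l) ω * (X (k, l) ω * X (k, l) ω))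
              = fun ω => X (k, l) ω ^ 4 := funext fun ω => by ring
          exact ⟨he ▸ hint (k, l) 4, by rw [he, hm4]⟩
        · rw [if_pos rfl, if_neg hlj]
          have hne : ((k, l) : Fin q × Fin m) ≠ (k, j) :=
            fun h => hlj (congrArg Prod.snd h)
          have he : (fun ω => X (k, l) ω * X (k, l) ω * (X (k, l) ω * X (k, j) ω))
              = fun ω => X (k, l) ω ^ 3 * X (k, j) ω ^ 1 := funext fun ω => by ring
          exact ⟨he ▸ hpairInt _ _ 3 1 hne,
            by rw [he, hpairE _ _ 3 1 hne, hm3, zero_mul]⟩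
      · by_cases hlj : l = j
        · subst hlj
          rw [if_neg hli, if_pos rfl]
          have hne : ((k, i) : Fin q × Fin m) ≠ (k, l) :=
            fun h => hli (congrArg Prod.snd h).symm
          have he : (fun ω => X (k, i) ω * X (k, l) ω * (X (k, l) ω * X (k, l) ω))
              = fun ω => X (k, i) ω ^ 1 * X (k, l) ω ^ 3 := funext fun ω => by ring
          exact ⟨he ▸ hpairInt _ _ 1 3 hne,
            by rw [he, hpairE _ _ 1 3 hne, hm1, zero_mul]⟩
        · rw [if_neg hli, if_neg hlj]
          by_cases hij : i = j
          · subst hij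
            rw [if_pos rfl]
            have hne : ((k, i) : Fin q × Fin m) ≠ (k, l) :=
              fun h => hli (congrArg Prod.snd h).symm
            have he : (fun ω => X (k, i) ω * X (k, l) ω * (X (k, l) ω * X (k, i) ω))
                = fun ω => X (k, i) ω ^ 2 * X (k, l) ω ^ 2 := funext fun ω => by ring
            exact ⟨he ▸ hpairInt _ _ 2 2 hne,
              by rw [he, hpairE _ _ 2 2 hne, hm2, hm2, ← pow_two]⟩
          · rw [if_neg hij]
            have hab : ((k, i) : Fin q × Fin m) ≠ (k, j) :=
              fun h => hij (congrArg Prod.snd h)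
            have hac : ((k, i) : Fin q × Fin m) ≠ (k, l) :=
              fun h => hli (congrArg Prod.snd h).symm
            have hbc : ((k, j) : Fin q × Fin m) ≠ (k, l) :=
              fun h => hlj (congrArg Prod.snd h).symm
            have he : (fun ω => X (k, i) ω * X (k, l) ω * (X (k, l) ω * X (k, j) ω))
                = fun ω => X (k, i) ω * X (k, j) ω * X (k, l) ω ^ 2 := funext fun ω => by ring
            exact ⟨he ▸ htripInt _ _ _ hac hbc,
              by rw [he, htripE _ _ _ hab hac hbc]⟩
    · rw [if_neg hka]
      have h1 : ((k, i) : Fin q × Fin m) ≠ (a, l) := fun h => hka (congrArg Prod.fst h)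
      have h2 : ((k, i) : Fin q × Fin m) ≠ (a, j) := fun h => hka (congrArg Prod.fst h)
      have h3 : ((k, l) : Fin q × Fin m) ≠ (a, l) := fun h => hka (congrArg Prod.fst h)
      have h4 : ((k, l) : Fin q × Fin m) ≠ (a, j) := fun h => hka (congrArg Prod.fst h)
      refine ⟨hgroupInt _ _ _ _ h1 h2 h3 h4, ?_⟩
      rw [hgroupE _ _ _ _ h1 h2 h3 h4]
      congr 1
      · by_cases h : l = i
        · subst h; rw [if_pos rfl, if_pos rfl]
        · rw [if_neg (fun hh => h (congrArg Prod.snd hh).symm), if_neg h]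
      · by_cases h : l = j
        · subst h; rw [if_pos rfl, if_pos rfl]
        · rw [if_neg (fun hh => h (congrArg Prod.snd hh)), if_neg h]
  have hswap : ∀ i j : Fin m, (∫ ω, ((Φ ω)ᵀ * Φ ω * (Φ ω)ᵀ * Φ ω) i j ∂μ) =
      ∑ a : Fin q, ∑ l : Fin m, ∑ k : Fin q,
        ∫ ω, X (k, i) ω * X (k, l) ω * (X (a, l) ω * X (a, j) ω) ∂μ := by
    intro i j
    have hentry : ∀ ω, ((Φ ω)ᵀ * Φ ω * (Φ ω)ᵀ * Φ ω) i j =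
        ∑ a : Fin q, ∑ l : Fin m, ∑ k : Fin q,
          X (k, i) ω * X (k, l) ω * (X (a, l) ω * X (a, j) ω) := by
      intro ω
      simp only [hXdef]
      simp only [Matrix.mul_apply, Matrix.transpose_apply, Finset.sum_mul, Finset.mul_sum]
      refine Finset.sum_congr rfl fun a _ => Finset.sum_congr rfl fun l _ =>
        Finset.sum_congr rfl fun k _ => by ring
    simp_rw [hentry]
    rw [integral_finset_sum _ (fun a _ => integrable_finset_sum _ fun l _ =>
      integrable_finset_sum _ fun k _ => (hterm k a i l j).1)]
    refine Finset.sum_congr rfl fun a _ => ?_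
    rw [integral_finset_sum _ (fun l _ => integrable_finset_sum _ fun k _ =>
      (hterm k a i l j).1)]
    refine Finset.sum_congr rfl fun l _ => ?_
    rw [integral_finset_sum _ fun k _ => (hterm k a i l j).1]
  constructor
  · intro i
    rw [hswap i i]
    have hval : ∀ (a : Fin q) (l : Fin m) (k : Fin q),
        (∫ ω, X (k, i) ω * X (k, l) ω * (X (a, l) ω * X (a, i) ω) ∂μ) =
        (if k = a then (if l = i then 3 * vr ^ 2 else vr ^ 2)
          else (if l = i then vr else 0) * (if l = i then vr else 0)) := by
      intro a l k
      rw [(hterm k a i l i).2]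
      by_cases hka : k = a <;> by_cases hli : l = i <;> simp [hka, hli]
    simp_rw [hval]
    exact diag_sum q m hq i vr hvr
  · intro i j hij
    rw [hswap i j]
    refine Finset.sum_eq_zero fun a _ => Finset.sum_eq_zero fun l _ =>
      Finset.sum_eq_zero fun k _ => ?_
    rw [(hterm k a i l j).2]
    by_cases hli : l = i
    · have hlj : ¬ l = j := fun h => hij (hli.symm.trans h)
      by_cases hka : k = a <;> simp [hka, hli, hlj, hij, Ne.symm hij]
    · by_cases hka : k = a <;> by_cases hlj : l = j <;> simp [hka, hli, hlj, hij, Ne.symm hij]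
end

section
/- Let Φ be a q×m random matrix with entries drawn i.i.d. from N(0, 1/q). Then for any fixed matrix X ∈ R^{m×D}, the expected squared Frobenius-norm reconstruction error satisfies E_Φ[ ‖Φ^T Φ X − X‖_F^2 ] = ((m+1)/q) · ‖X‖_F^2. -/
open MeasureTheory ProbabilityTheory Matrix
open scoped NNReal ENNReal

section GaussAux

open Real

private lemma myIntegrablePow {b : ℝ} (hb : 0 < b) (n : ℕ) :
    Integrable fun x : ℝ => x ^ n * Real.exp (-b * x ^ 2) := by
  have h := integrable_rpow_mul_exp_neg_mul_sq hb (s := (n : ℝ))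
    (by exact_mod_cast neg_one_lt_zero.trans_le (Nat.cast_nonneg n))
  simpa [Real.rpow_natCast] using h

private lemma myEvenMoment {b : ℝ} (hb : 0 < b) (k : ℕ) :
    ∫ x : ℝ, x ^ (2 * k) * Real.exp (-b * x ^ 2) =
      b ^ (-(2 * (k : ℝ) + 1) / 2) * Real.Gamma ((2 * (k : ℝ) + 1) / 2) := by
  have h1 : (∫ x : ℝ, x ^ (2 * k) * Real.exp (-b * x ^ 2)) =
      2 * ∫ x in Set.Ioi (0:ℝ), x ^ (2 * k) * Real.exp (-b * x ^ 2) := by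
    rw [← integral_comp_abs (f := fun x => x ^ (2 * k) * Real.exp (-b * x ^ 2))]
    congr 1
    ext x
    rw [pow_mul, pow_mul, sq_abs]
  have h2 : (∫ x in Set.Ioi (0:ℝ), x ^ (2 * k) * Real.exp (-b * x ^ 2)) =
      ∫ x in Set.Ioi (0:ℝ), x ^ ((2 * k : ℕ) : ℝ) * Real.exp (-b * x ^ (2:ℝ)) := by
    refine setIntegral_congr_fun measurableSet_Ioi (fun x hx => ?_)
    rw [Real.rpow_natCast, Real.rpow_two]
  rw [h1, h2, integral_rpow_mul_exp_neg_mul_rpow two_pos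
    (by exact_mod_cast neg_one_lt_zero.trans_le (Nat.cast_nonneg _)) hb]
  push_cast
  ring

private lemma myOddMoment {b : ℝ} (n : ℕ) (hn : Odd n) :
    ∫ x : ℝ, x ^ n * Real.exp (-b * x ^ 2) = 0 := by
  have h := integral_neg_eq_self (fun x : ℝ => x ^ n * Real.exp (-b * x ^ 2)) volume
  have h2 : (∫ x : ℝ, (-x) ^ n * Real.exp (-b * (-x) ^ 2)) =
      ∫ x : ℝ, -(x ^ n * Real.exp (-b * x ^ 2)) := by
    congr 1; ext x; rw [hn.neg_pow, neg_sq]; ring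
  rw [h2, integral_neg] at h
  linarith

private lemma myPdfEq (v : ℝ≥0) : ProbabilityTheory.gaussianPDFReal 0 v =
    fun x => (Real.sqrt (2 * Real.pi * v))⁻¹ * Real.exp (-(2 * (v:ℝ))⁻¹ * x ^ 2) := by
  ext x
  rw [ProbabilityTheory.gaussianPDFReal]
  rw [sub_zero, div_eq_mul_inv]
  ring_nf

private lemma myGaussInt {v : ℝ≥0} (hv : v ≠ 0) (g : ℝ → ℝ) :
    ∫ x, g x ∂(ProbabilityTheory.gaussianReal 0 v) =
      ∫ x, ProbabilityTheory.gaussianPDFReal 0 v x * g x := by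
  rw [ProbabilityTheory.gaussianReal_of_var_ne_zero 0 hv]
  have hd : ProbabilityTheory.gaussianPDF 0 v =
      fun x => ((ProbabilityTheory.gaussianPDFReal 0 v x).toNNReal : ℝ≥0∞) := rfl
  rw [hd, integral_withDensity_eq_integral_smul
    ((ProbabilityTheory.measurable_gaussianPDFReal 0 v).real_toNNReal) g]
  congr 1
  ext x
  rw [NNReal.smul_def, smul_eq_mul,
    Real.coe_toNNReal _ (ProbabilityTheory.gaussianPDFReal_nonneg 0 v x)]

private lemma myGaussIntegrable {v : ℝ≥0} (hv : v ≠ 0) (n : ℕ) :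
    Integrable (fun x => x ^ n) (ProbabilityTheory.gaussianReal 0 v) := by
  rw [ProbabilityTheory.gaussianReal_of_var_ne_zero 0 hv]
  have hd : ProbabilityTheory.gaussianPDF 0 v =
      fun x => ((ProbabilityTheory.gaussianPDFReal 0 v x).toNNReal : ℝ≥0∞) := rfl
  rw [hd, integrable_withDensity_iff_integrable_smul
    ((ProbabilityTheory.measurable_gaussianPDFReal 0 v).real_toNNReal)]
  have hb : 0 < (2 * (v:ℝ))⁻¹ := by
    have : 0 < (v:ℝ) := by positivity
    positivity
  refine ((myIntegrablePow hb n).const_mul ((Real.sqrt (2 * Real.pi * v))⁻¹)).congr ?_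
  refine Filter.Eventually.of_forall (fun x => ?_)
  simp only [NNReal.smul_def, smul_eq_mul]
  rw [Real.coe_toNNReal _ (ProbabilityTheory.gaussianPDFReal_nonneg 0 v x), myPdfEq]
  ring

private lemma myGaussMomentOdd {v : ℝ≥0} (hv : v ≠ 0) {n : ℕ} (hn : Odd n) :
    ∫ x, x ^ n ∂(ProbabilityTheory.gaussianReal 0 v) = 0 := by
  rw [myGaussInt hv, myPdfEq]
  have : (∫ x : ℝ, (fun x => (Real.sqrt (2 * Real.pi * v))⁻¹ *
        Real.exp (-(2 * (v:ℝ))⁻¹ * x ^ 2)) x * x ^ n) =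
      ∫ x : ℝ, (Real.sqrt (2 * Real.pi * v))⁻¹ *
        (x ^ n * Real.exp (-(2 * (v:ℝ))⁻¹ * x ^ 2)) := by
    congr 1; ext x; ring
  rw [this, integral_const_mul, myOddMoment n hn, mul_zero]

private lemma myGaussMomentEven {v : ℝ≥0} (hv : v ≠ 0) (k : ℕ) :
    ∫ x, x ^ (2 * k) ∂(ProbabilityTheory.gaussianReal 0 v) =
      (Real.sqrt (2 * Real.pi * v))⁻¹ *
        ((2 * (v:ℝ)) ^ ((2 * (k:ℝ) + 1) / 2) * Real.Gamma ((2 * (k : ℝ) + 1) / 2)) := by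
  have hv' : 0 < (v : ℝ) := by positivity
  have hu : 0 < 2 * (v : ℝ) := by linarith
  have hb : 0 < (2 * (v:ℝ))⁻¹ := by positivity
  rw [myGaussInt hv, myPdfEq]
  have : (∫ x : ℝ, (fun x => (Real.sqrt (2 * Real.pi * v))⁻¹ *
        Real.exp (-(2 * (v:ℝ))⁻¹ * x ^ 2)) x * x ^ (2 * k)) =
      ∫ x : ℝ, (Real.sqrt (2 * Real.pi * v))⁻¹ *
        (x ^ (2 * k) * Real.exp (-(2 * (v:ℝ))⁻¹ * x ^ 2)) := by
    congr 1; ext x; ring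
  rw [this, integral_const_mul, myEvenMoment hb k]
  congr 2
  rw [← Real.rpow_neg_one (2 * (v:ℝ)), ← Real.rpow_mul hu.le]
  congr 1
  ring

private lemma myGaussMoment2 {v : ℝ≥0} (hv : v ≠ 0) :
    ∫ x, x ^ 2 ∂(ProbabilityTheory.gaussianReal 0 v) = v := by
  have hv' : 0 < (v : ℝ) := by positivity
  have hu : 0 < 2 * (v : ℝ) := by linarith
  have h := myGaussMomentEven hv 1
  push_cast at h
  simp only [show ((2:ℝ)*1+1)/2 = 3/2 by norm_num, show 2*1 = 2 from rfl] at h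
  rw [h]
  have hG : Real.Gamma (3/2) = (1/2) * Real.sqrt Real.pi := by
    have := Real.Gamma_add_one (s := 1/2) (by norm_num)
    rw [show (1:ℝ)/2 + 1 = 3/2 by norm_num, Real.Gamma_one_half_eq] at this
    linarith [this]
  have hpow : (2 * (v:ℝ)) ^ ((3:ℝ)/2) = (2 * (v:ℝ)) * Real.sqrt (2 * (v:ℝ)) := by
    rw [show (3:ℝ)/2 = 1 + 1/2 by norm_num, Real.rpow_add hu, Real.rpow_one,
      ← Real.sqrt_eq_rpow]
  have hsq : Real.sqrt (2 * Real.pi * (v:ℝ)) =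
      Real.sqrt Real.pi * Real.sqrt (2 * (v:ℝ)) := by
    rw [← Real.sqrt_mul Real.pi_pos.le]
    congr 1; ring
  rw [hpow, hG, hsq]
  have h1 : Real.sqrt Real.pi > 0 := Real.sqrt_pos.mpr Real.pi_pos
  have h2 : Real.sqrt (2 * (v:ℝ)) > 0 := Real.sqrt_pos.mpr hu
  field_simp

private lemma myGaussMoment4 {v : ℝ≥0} (hv : v ≠ 0) :
    ∫ x, x ^ 4 ∂(ProbabilityTheory.gaussianReal 0 v) = 3 * (v:ℝ) ^ 2 := by
  have hv' : 0 < (v : ℝ) := by positivity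
  have hu : 0 < 2 * (v : ℝ) := by linarith
  have h := myGaussMomentEven hv 2
  push_cast at h
  simp only [show ((2:ℝ)*2+1)/2 = 5/2 by norm_num, show 2*2 = 4 from rfl] at h
  rw [h]
  have hG3 : Real.Gamma (3/2) = (1/2) * Real.sqrt Real.pi := by
    have := Real.Gamma_add_one (s := 1/2) (by norm_num)
    rw [show (1:ℝ)/2 + 1 = 3/2 by norm_num, Real.Gamma_one_half_eq] at this
    linarith [this]
  have hG : Real.Gamma (5/2) = (3/4) * Real.sqrt Real.pi := by
    have := Real.Gamma_add_one (s := 3/2) (by norm_num)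
    rw [show (3:ℝ)/2 + 1 = 5/2 by norm_num, hG3] at this
    linarith [this]
  have hpow : (2 * (v:ℝ)) ^ ((5:ℝ)/2) = (2 * (v:ℝ))^2 * Real.sqrt (2 * (v:ℝ)) := by
    rw [show (5:ℝ)/2 = 2 + 1/2 by norm_num, Real.rpow_add hu, Real.rpow_two,
      ← Real.sqrt_eq_rpow]
  have hsq : Real.sqrt (2 * Real.pi * (v:ℝ)) =
      Real.sqrt Real.pi * Real.sqrt (2 * (v:ℝ)) := by
    rw [← Real.sqrt_mul Real.pi_pos.le]
    congr 1; ring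
  rw [hpow, hG, hsq]
  have h1 : Real.sqrt Real.pi > 0 := Real.sqrt_pos.mpr Real.pi_pos
  have h2 : Real.sqrt (2 * (v:ℝ)) > 0 := Real.sqrt_pos.mpr hu
  field_simp
  ring

end GaussAux

/-- If `Φ` is a `q × m` random matrix with entries i.i.d.
Gaussian with mean `0` and variance `1/q`, then for any fixed `X ∈ ℝ^{m×D}`,
`E[‖Φᵀ Φ X − X‖_F²] = ((m + 1)/q) ‖X‖_F²`, where the squared Frobenius norm
of a matrix `M` is `Σ_{i,j} (M i j)²`. -/
theorem expectation_reconstruction_error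
    {Ω : Type*} [MeasurableSpace Ω] (μ : Measure Ω) [IsProbabilityMeasure μ]
    (q m D : ℕ) (hq : 0 < q)
    (Φ : Ω → Matrix (Fin q) (Fin m) ℝ)
    (hmeas : ∀ i j, Measurable (fun ω => Φ ω i j))
    (hindep : iIndepFun
      (fun (p : Fin q × Fin m) ω => Φ ω p.1 p.2) μ)
    (hlaw : ∀ i j, μ.map (fun ω => Φ ω i j) = gaussianReal 0 ((q : NNReal)⁻¹))
    (X : Matrix (Fin m) (Fin D) ℝ) :
    (∫ ω, ∑ i, ∑ j, (((Φ ω)ᵀ * Φ ω * X - X) i j) ^ 2 ∂μ) =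
      ((m : ℝ) + 1) / q * ∑ i, ∑ j, (X i j) ^ 2 := by
  classical
  have hqR : (q:ℝ) ≠ 0 := Nat.cast_ne_zero.mpr hq.ne'
  have hv : ((q : NNReal)⁻¹ : ℝ≥0) ≠ 0 := by
    simp only [ne_eq, inv_eq_zero, Nat.cast_eq_zero]
    exact hq.ne'
  have hvr : (((q : NNReal)⁻¹ : ℝ≥0) : ℝ) = (q:ℝ)⁻¹ := by push_cast; rfl
  have hpmeas : ∀ p : Fin q × Fin m, Measurable (fun ω => Φ ω p.1 p.2) :=
    fun p => hmeas p.1 p.2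
  -- integrability of powers of entries
  have hIntPow : ∀ (s : Fin q) (a : Fin m) (n : ℕ),
      Integrable (fun ω => Φ ω s a ^ n) μ := by
    intro s a n
    have h1 : Integrable (fun x : ℝ => x ^ n) (μ.map (fun ω => Φ ω s a)) := by
      rw [hlaw s a]; exact myGaussIntegrable hv n
    exact (integrable_map_measure (measurable_id.pow_const n).aestronglyMeasurable
      (hmeas s a).aemeasurable).mp h1
  have hIntPow1 : ∀ (s : Fin q) (a : Fin m), Integrable (fun ω => Φ ω s a) μ := by
    intro s a
    simpa using hIntPow s a 1
  -- moments of entries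
  have hMom : ∀ (s : Fin q) (a : Fin m) (n : ℕ),
      ∫ ω, Φ ω s a ^ n ∂μ = ∫ x, x ^ n ∂(gaussianReal 0 ((q : NNReal)⁻¹)) := by
    intro s a n
    have h := integral_map (μ := μ) (φ := fun ω => Φ ω s a) (f := fun x : ℝ => x ^ n)
      (hmeas s a).aemeasurable (measurable_id.pow_const n).aestronglyMeasurable
    rw [hlaw s a] at h
    exact h.symm
  have hE1 : ∀ (s : Fin q) (a : Fin m), ∫ ω, Φ ω s a ∂μ = 0 := by
    intro s a
    have h := hMom s a 1
    simp only [pow_one] at h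
    rw [h]
    simpa using myGaussMomentOdd hv odd_one
  have hE2 : ∀ (s : Fin q) (a : Fin m), ∫ ω, Φ ω s a ^ 2 ∂μ = (q:ℝ)⁻¹ := by
    intro s a
    rw [hMom s a 2, myGaussMoment2 hv, hvr]
  have hE4 : ∀ (s : Fin q) (a : Fin m), ∫ ω, Φ ω s a ^ 4 ∂μ = 3 * ((q:ℝ)⁻¹) ^ 2 := by
    intro s a
    rw [hMom s a 4, myGaussMoment4 hv, hvr]
  -- pairwise products
  have hPairInt : ∀ (s t : Fin q) (a b : Fin m),
      Integrable (fun ω => Φ ω s a * Φ ω t b) μ := by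
    intro s t a b
    by_cases h : ((s, a) : Fin q × Fin m) = (t, b)
    · rw [Prod.mk.injEq] at h
      obtain ⟨rfl, rfl⟩ := h
      have heq : (fun ω => Φ ω s a * Φ ω s a) = fun ω => Φ ω s a ^ 2 := by
        ext ω; ring
      rw [heq]; exact hIntPow s a 2
    · have hI : IndepFun (fun ω => Φ ω s a) (fun ω => Φ ω t b) μ := hindep.indepFun h
      exact hI.integrable_mul (hIntPow1 s a) (hIntPow1 t b)
  have hPairVal : ∀ (s t : Fin q) (a b : Fin m),
      ∫ ω, Φ ω s a * Φ ω t b ∂μ = if s = t ∧ a = b then (q:ℝ)⁻¹ else 0 := by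
    intro s t a b
    by_cases h : s = t ∧ a = b
    · obtain ⟨rfl, rfl⟩ := h
      rw [if_pos ⟨rfl, rfl⟩]
      have heq : (fun ω => Φ ω s a * Φ ω s a) = fun ω => Φ ω s a ^ 2 := by
        ext ω; ring
      rw [heq]; exact hE2 s a
    · rw [if_neg h]
      have hne : ((s, a) : Fin q × Fin m) ≠ (t, b) := by
        simpa [Prod.ext_iff] using h
      have hI : IndepFun (fun ω => Φ ω s a) (fun ω => Φ ω t b) μ := hindep.indepFun hne
      have hval : ∫ ω, Φ ω s a * Φ ω t b ∂μ =
          (∫ ω, Φ ω s a ∂μ) * (∫ ω, Φ ω t b ∂μ) :=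
        hI.integral_fun_mul_eq_mul_integral (hmeas s a).aestronglyMeasurable (hmeas t b).aestronglyMeasurable
      rw [hval, hE1 s a, zero_mul]
  -- main fourth moment computation
  have hProd : ∀ (s t : Fin q) (i k l : Fin m),
      Integrable (fun ω => Φ ω s i * Φ ω s k * (Φ ω t i * Φ ω t l)) μ ∧
      ∫ ω, Φ ω s i * Φ ω s k * (Φ ω t i * Φ ω t l) ∂μ =
        (if s = t then (if k = l then (if k = i then (3:ℝ) else 1) else 0)
          else (if k = i then 1 else 0) * (if l = i then 1 else 0)) * ((q:ℝ)⁻¹) ^ 2 := by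
    intro s t i k l
    by_cases hst : s = t
    · subst hst
      by_cases hkl : k = l
      · subst hkl
        by_cases hki : k = i
        · subst hki
          have heq : (fun ω => Φ ω s k * Φ ω s k * (Φ ω s k * Φ ω s k)) =
              fun ω => Φ ω s k ^ 4 := by ext ω; ring
          constructor
          · rw [heq]; exact hIntPow s k 4
          · rw [heq, hE4 s k]; simp
        · have hne : ((s, i) : Fin q × Fin m) ≠ (s, k) := by
            simp only [ne_eq, Prod.mk.injEq, not_and]
            exact fun _ => fun h => hki h.symm
          have hI : IndepFun (fun ω => Φ ω s i ^ 2) (fun ω => Φ ω s k ^ 2) μ :=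
            (hindep.indepFun hne).comp (measurable_id.pow_const 2) (measurable_id.pow_const 2)
          have heq : (fun ω => Φ ω s i * Φ ω s k * (Φ ω s i * Φ ω s k)) =
              fun ω => Φ ω s i ^ 2 * Φ ω s k ^ 2 := by ext ω; ring
          constructor
          · rw [heq]; exact hI.integrable_mul (hIntPow s i 2) (hIntPow s k 2)
          · rw [heq]
            have hval : ∫ ω, Φ ω s i ^ 2 * Φ ω s k ^ 2 ∂μ =
                (∫ ω, Φ ω s i ^ 2 ∂μ) * (∫ ω, Φ ω s k ^ 2 ∂μ) :=
              hI.integral_fun_mul_eq_mul_integral ((hmeas s i).pow_const 2).aestronglyMeasurable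
                ((hmeas s k).pow_const 2).aestronglyMeasurable
            rw [hval, hE2 s i, hE2 s k]
            simp [hki]
            ring
      · -- k ≠ l, same row
        by_cases hki : k = i
        · subst hki
          -- integrand : Φ s k ^3 * Φ s l with l ≠ k
          have hne : ((s, k) : Fin q × Fin m) ≠ (s, l) := by
            simp only [ne_eq, Prod.mk.injEq, not_and]
            exact fun _ => hkl
          have hI : IndepFun (fun ω => Φ ω s k ^ 3) (fun ω => Φ ω s l) μ :=
            (hindep.indepFun hne).comp (measurable_id.pow_const 3) measurable_id
          have heq : (fun ω => Φ ω s k * Φ ω s k * (Φ ω s k * Φ ω s l)) =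
              fun ω => Φ ω s k ^ 3 * Φ ω s l := by ext ω; ring
          constructor
          · rw [heq]; exact hI.integrable_mul (hIntPow s k 3) (hIntPow1 s l)
          · rw [heq]
            have hval : ∫ ω, Φ ω s k ^ 3 * Φ ω s l ∂μ =
                (∫ ω, Φ ω s k ^ 3 ∂μ) * (∫ ω, Φ ω s l ∂μ) :=
              hI.integral_fun_mul_eq_mul_integral ((hmeas s k).pow_const 3).aestronglyMeasurable
                (hmeas s l).aestronglyMeasurable
            rw [hval, hE1 s l, mul_zero]
            simp [hkl]
        · by_cases hli : l = i
          · subst hli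
            -- integrand : Φ s l ^3 * Φ s k with k ≠ l
            have hne : ((s, l) : Fin q × Fin m) ≠ (s, k) := by
              simp only [ne_eq, Prod.mk.injEq, not_and]
              exact fun _ => fun h => hkl h.symm
            have hI : IndepFun (fun ω => Φ ω s l ^ 3) (fun ω => Φ ω s k) μ :=
              (hindep.indepFun hne).comp (measurable_id.pow_const 3) measurable_id
            have heq : (fun ω => Φ ω s l * Φ ω s k * (Φ ω s l * Φ ω s l)) =
                fun ω => Φ ω s l ^ 3 * Φ ω s k := by ext ω; ring
            constructor
            · rw [heq]; exact hI.integrable_mul (hIntPow s l 3) (hIntPow1 s k)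
            · rw [heq]
              have hval : ∫ ω, Φ ω s l ^ 3 * Φ ω s k ∂μ =
                  (∫ ω, Φ ω s l ^ 3 ∂μ) * (∫ ω, Φ ω s k ∂μ) :=
                hI.integral_fun_mul_eq_mul_integral ((hmeas s l).pow_const 3).aestronglyMeasurable
                  (hmeas s k).aestronglyMeasurable
              rw [hval, hE1 s k, mul_zero]
              simp [hkl]
          · -- k ≠ i, l ≠ i, k ≠ l : three distinct coordinates
            have hne1 : ((s, i) : Fin q × Fin m) ≠ (s, l) := by
              simp only [ne_eq, Prod.mk.injEq, not_and]
              exact fun _ => fun h => hli h.symm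
            have hne2 : ((s, k) : Fin q × Fin m) ≠ (s, l) := by
              simp only [ne_eq, Prod.mk.injEq, not_and]
              exact fun _ => hkl
            have hne3 : ((s, i) : Fin q × Fin m) ≠ (s, k) := by
              simp only [ne_eq, Prod.mk.injEq, not_and]
              exact fun _ => fun h => hki h.symm
            have hpm : IndepFun (fun ω => (Φ ω s i, Φ ω s k)) (fun ω => Φ ω s l) μ :=
              hindep.indepFun_prodMk hpmeas (s, i) (s, k) (s, l) hne1 hne2
            have hI : IndepFun (fun ω => Φ ω s i ^ 2 * Φ ω s k) (fun ω => Φ ω s l) μ :=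
              hpm.comp ((measurable_fst.pow_const 2).mul measurable_snd) measurable_id
            have hI2 : IndepFun (fun ω => Φ ω s i ^ 2) (fun ω => Φ ω s k) μ :=
              (hindep.indepFun hne3).comp (measurable_id.pow_const 2) measurable_id
            have hinner : Integrable (fun ω => Φ ω s i ^ 2 * Φ ω s k) μ :=
              hI2.integrable_mul (hIntPow s i 2) (hIntPow1 s k)
            have heq : (fun ω => Φ ω s i * Φ ω s k * (Φ ω s i * Φ ω s l)) =
                fun ω => Φ ω s i ^ 2 * Φ ω s k * Φ ω s l := by ext ω; ring
            constructor
            · rw [heq]; exact hI.integrable_mul hinner (hIntPow1 s l)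
            · rw [heq]
              have hval : ∫ ω, Φ ω s i ^ 2 * Φ ω s k * Φ ω s l ∂μ =
                  (∫ ω, Φ ω s i ^ 2 * Φ ω s k ∂μ) * (∫ ω, Φ ω s l ∂μ) :=
                hI.integral_fun_mul_eq_mul_integral (((hmeas s i).pow_const 2).mul (hmeas s k)).aestronglyMeasurable
                  (hmeas s l).aestronglyMeasurable
              rw [hval, hE1 s l, mul_zero]
              simp [hkl]
    · -- s ≠ t : independent rows
      have h1 : ((s, i) : Fin q × Fin m) ≠ (t, i) := by
        simp only [ne_eq, Prod.mk.injEq, not_and]; exact fun h => absurd h hst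
      have h2 : ((s, i) : Fin q × Fin m) ≠ (t, l) := by
        simp only [ne_eq, Prod.mk.injEq, not_and]; exact fun h => absurd h hst
      have h3 : ((s, k) : Fin q × Fin m) ≠ (t, i) := by
        simp only [ne_eq, Prod.mk.injEq, not_and]; exact fun h => absurd h hst
      have h4 : ((s, k) : Fin q × Fin m) ≠ (t, l) := by
        simp only [ne_eq, Prod.mk.injEq, not_and]; exact fun h => absurd h hst
      have hI : IndepFun (fun ω => Φ ω s i * Φ ω s k) (fun ω => Φ ω t i * Φ ω t l) μ :=
        hindep.indepFun_mul_mul hpmeas (s, i) (s, k) (t, i) (t, l) h1 h2 h3 h4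
      constructor
      · exact hI.integrable_mul (hPairInt s s i k) (hPairInt t t i l)
      · have hval : ∫ ω, Φ ω s i * Φ ω s k * (Φ ω t i * Φ ω t l) ∂μ =
            (∫ ω, Φ ω s i * Φ ω s k ∂μ) * (∫ ω, Φ ω t i * Φ ω t l ∂μ) :=
          hI.integral_fun_mul_eq_mul_integral ((hmeas s i).mul (hmeas s k)).aestronglyMeasurable
            ((hmeas t i).mul (hmeas t l)).aestronglyMeasurable
        rw [hval, hPairVal s s i k, hPairVal t t i l]
        simp only [if_neg hst, true_and]
        by_cases hik : i = k <;> by_cases hil : i = l <;>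
          simp [hik, hil, eq_comm] <;> ring
  -- per-entry computation
  have key : ∀ (i : Fin m) (j : Fin D),
      Integrable (fun ω => (∑ k, (∑ s, Φ ω s i * Φ ω s k) * X k j - X i j) ^ 2) μ ∧
      ∫ ω, (∑ k, (∑ s, Φ ω s i * Φ ω s k) * X k j - X i j) ^ 2 ∂μ =
        ((∑ k, X k j ^ 2) + X i j ^ 2) * (q:ℝ)⁻¹ := by
    intro i j
    have hTint : Integrable (fun ω => ∑ k, ∑ s, Φ ω s i * Φ ω s k * X k j) μ :=
      integrable_finset_sum _ (fun k _ => integrable_finset_sum _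
        (fun s _ => (hPairInt s s i k).mul_const _))
    have hTval : ∫ ω, ∑ k, ∑ s, Φ ω s i * Φ ω s k * X k j ∂μ = X i j := by
      rw [integral_finset_sum _ (fun k _ => integrable_finset_sum _
        (fun s _ => (hPairInt s s i k).mul_const _))]
      have h1 : ∀ k : Fin m, ∫ ω, ∑ s, Φ ω s i * Φ ω s k * X k j ∂μ =
          ∑ s : Fin q, (if i = k then (q:ℝ)⁻¹ else 0) * X k j := by
        intro k
        rw [integral_finset_sum _ (fun s _ => (hPairInt s s i k).mul_const _)]
        refine Finset.sum_congr rfl fun s _ => ?_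
        rw [integral_mul_const, hPairVal s s i k]
        simp
      rw [Finset.sum_congr rfl fun k _ => h1 k]
      simp [Finset.sum_ite_eq, ite_mul, zero_mul, Finset.sum_const, Finset.card_univ]
      field_simp
    have hT2f : (fun ω => (∑ k, ∑ s, Φ ω s i * Φ ω s k * X k j) ^ 2) =
        fun ω => ∑ k, ∑ l, ∑ s, ∑ t,
          Φ ω s i * Φ ω s k * (Φ ω t i * Φ ω t l) * (X k j * X l j) := by
      ext ω
      rw [sq, Finset.sum_mul_sum]
      refine Finset.sum_congr rfl fun k _ => Finset.sum_congr rfl fun l _ => ?_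
      rw [Finset.sum_mul_sum]
      refine Finset.sum_congr rfl fun s _ => Finset.sum_congr rfl fun t _ => ?_
      ring
    have hT2int : Integrable (fun ω => (∑ k, ∑ s, Φ ω s i * Φ ω s k * X k j) ^ 2) μ := by
      rw [hT2f]
      exact integrable_finset_sum _ (fun k _ => integrable_finset_sum _
        (fun l _ => integrable_finset_sum _ (fun s _ => integrable_finset_sum _
          (fun t _ => (hProd s t i k l).1.mul_const _))))
    have hT2val : ∫ ω, (∑ k, ∑ s, Φ ω s i * Φ ω s k * X k j) ^ 2 ∂μ =
        (∑ k, X k j ^ 2) * (q:ℝ)⁻¹ + X i j ^ 2 + X i j ^ 2 * (q:ℝ)⁻¹ := by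
      rw [hT2f]
      rw [integral_finset_sum _ (fun k _ => integrable_finset_sum _
        (fun l _ => integrable_finset_sum _ (fun s _ => integrable_finset_sum _
          (fun t _ => (hProd s t i k l).1.mul_const _))))]
      have h1 : ∀ k : Fin m, ∫ ω, ∑ l, ∑ s, ∑ t,
          Φ ω s i * Φ ω s k * (Φ ω t i * Φ ω t l) * (X k j * X l j) ∂μ =
          ∑ l : Fin m, ∑ s : Fin q, ∑ t : Fin q,
            ((if s = t then (if k = l then (if k = i then (3:ℝ) else 1) else 0)
              else (if k = i then 1 else 0) * (if l = i then 1 else 0)) * ((q:ℝ)⁻¹) ^ 2)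
              * (X k j * X l j) := by
        intro k
        rw [integral_finset_sum _ (fun l _ => integrable_finset_sum _
          (fun s _ => integrable_finset_sum _ (fun t _ => (hProd s t i k l).1.mul_const _)))]
        refine Finset.sum_congr rfl fun l _ => ?_
        rw [integral_finset_sum _ (fun s _ => integrable_finset_sum _
          (fun t _ => (hProd s t i k l).1.mul_const _))]
        refine Finset.sum_congr rfl fun s _ => ?_
        rw [integral_finset_sum _ (fun t _ => (hProd s t i k l).1.mul_const _)]
        refine Finset.sum_congr rfl fun t _ => ?_
        rw [integral_mul_const, (hProd s t i k l).2]
      rw [Finset.sum_congr rfl fun k _ => h1 k]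
      -- now a purely combinatorial sum
      have hsum_t : ∀ (k l : Fin m) (s : Fin q),
          (∑ t : Fin q, ((if s = t then (if k = l then (if k = i then (3:ℝ) else 1) else 0)
              else (if k = i then 1 else 0) * (if l = i then 1 else 0)) * ((q:ℝ)⁻¹) ^ 2)
              * (X k j * X l j)) =
          ((q:ℝ) - 1) * (((if k = i then 1 else 0) * (if l = i then 1 else 0)) * ((q:ℝ)⁻¹) ^ 2
              * (X k j * X l j))
            + (if k = l then (if k = i then (3:ℝ) else 1) else 0) * ((q:ℝ)⁻¹) ^ 2
              * (X k j * X l j) := by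
        intro k l s
        have hpt : ∀ t : Fin q,
            ((if s = t then (if k = l then (if k = i then (3:ℝ) else 1) else 0)
              else (if k = i then 1 else 0) * (if l = i then 1 else 0)) * ((q:ℝ)⁻¹) ^ 2)
              * (X k j * X l j) =
            (((if k = i then 1 else 0) * (if l = i then 1 else 0)) * ((q:ℝ)⁻¹) ^ 2
              * (X k j * X l j))
            + (if t = s then
                ((if k = l then (if k = i then (3:ℝ) else 1) else 0)
                  - (if k = i then 1 else 0) * (if l = i then 1 else 0)) * ((q:ℝ)⁻¹) ^ 2
                  * (X k j * X l j)
              else 0) := by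
          intro t
          by_cases h : t = s
          · subst h; simp only [if_pos rfl]
            split_ifs <;> ring
          · rw [if_neg h, if_neg (fun hh => h hh.symm)]; ring
        rw [Finset.sum_congr rfl fun t _ => hpt t, Finset.sum_add_distrib,
          Finset.sum_const, Finset.sum_ite_eq' Finset.univ s, if_pos (Finset.mem_univ s),
          Finset.card_univ, Fintype.card_fin, nsmul_eq_mul]
        ring
      rw [Finset.sum_congr rfl fun k _ => Finset.sum_congr rfl fun l _ =>
        Finset.sum_congr rfl fun s _ => hsum_t k l s]
      simp only [Finset.sum_const, Finset.card_univ, Fintype.card_fin, nsmul_eq_mul]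
      -- reduce the k,l sums
      have hre : ∀ x x1 : Fin m,
          (q:ℝ) * (((q:ℝ) - 1) * (((if x = i then (1:ℝ) else 0) * if x1 = i then (1:ℝ) else 0)
              * ((q:ℝ)⁻¹) ^ 2 * (X x j * X x1 j)) +
            (if x = x1 then if x = i then (3:ℝ) else 1 else 0) * ((q:ℝ)⁻¹) ^ 2
              * (X x j * X x1 j)) =
          (if x = i then (1:ℝ) else 0) * ((if x1 = i then (1:ℝ) else 0) *
              ((q:ℝ) * ((q:ℝ) - 1) * ((q:ℝ)⁻¹) ^ 2 * (X x j * X x1 j)))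
          + ((if x = x1 then ((q:ℝ) * ((q:ℝ)⁻¹) ^ 2 * (X x j * X x1 j)) else 0)
          + (if x = x1 then ((if x = i then (1:ℝ) else 0) *
              (2 * (q:ℝ) * ((q:ℝ)⁻¹) ^ 2 * (X x j * X x1 j))) else 0)) := by
        intro x x1
        split_ifs <;> ring
      rw [Finset.sum_congr rfl fun x _ => Finset.sum_congr rfl fun x1 _ => hre x x1]
      simp only [Finset.sum_add_distrib, ← Finset.mul_sum, ite_mul, one_mul, zero_mul,
        Finset.sum_ite_eq, Finset.sum_ite_eq', Finset.mem_univ, if_true]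
      simp only [← pow_two]
      simp only [Finset.sum_ite_irrel, Finset.sum_const_zero, Finset.sum_ite_eq',
        Finset.mem_univ, if_true]
      field_simp
      ring
    -- expand the square
    have hS1 : (fun ω => (∑ k, (∑ s, Φ ω s i * Φ ω s k) * X k j - X i j) ^ 2) =
        fun ω => (∑ k, ∑ s, Φ ω s i * Φ ω s k * X k j) ^ 2
          - 2 * X i j * (∑ k, ∑ s, Φ ω s i * Φ ω s k * X k j) + X i j ^ 2 := by
      ext ω
      have hflat : ∑ k, (∑ s, Φ ω s i * Φ ω s k) * X k j
          = ∑ k, ∑ s, Φ ω s i * Φ ω s k * X k j := by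
        refine Finset.sum_congr rfl fun k _ => ?_
        rw [Finset.sum_mul]
      rw [hflat]; ring
    constructor
    · rw [hS1]
      exact ((hT2int.sub (hTint.const_mul _)).add (integrable_const _))
    · rw [hS1]
      have e1 : ∫ ω, ((∑ k, ∑ s, Φ ω s i * Φ ω s k * X k j) ^ 2
            - 2 * X i j * (∑ k, ∑ s, Φ ω s i * Φ ω s k * X k j) + X i j ^ 2) ∂μ
          = (∫ ω, ((∑ k, ∑ s, Φ ω s i * Φ ω s k * X k j) ^ 2
            - 2 * X i j * (∑ k, ∑ s, Φ ω s i * Φ ω s k * X k j)) ∂μ)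
            + ∫ _ω, (X i j ^ 2 : ℝ) ∂μ :=
        integral_add (hT2int.sub (hTint.const_mul _)) (integrable_const _)
      have e2 : (∫ ω, ((∑ k, ∑ s, Φ ω s i * Φ ω s k * X k j) ^ 2
            - 2 * X i j * (∑ k, ∑ s, Φ ω s i * Φ ω s k * X k j)) ∂μ)
          = (∫ ω, (∑ k, ∑ s, Φ ω s i * Φ ω s k * X k j) ^ 2 ∂μ)
            - ∫ ω, 2 * X i j * (∑ k, ∑ s, Φ ω s i * Φ ω s k * X k j) ∂μ :=
        integral_sub hT2int (hTint.const_mul _)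
      rw [e1, e2, integral_const_mul, hT2val, hTval, integral_const]
      simp only [probReal_univ, ENNReal.toReal_one, smul_eq_mul, one_mul]
      ring
  -- assemble
  have hrw : (fun ω => ∑ i, ∑ j, (((Φ ω)ᵀ * Φ ω * X - X) i j) ^ 2) =
      fun ω => ∑ i, ∑ j, (∑ k, (∑ s, Φ ω s i * Φ ω s k) * X k j - X i j) ^ 2 := by
    ext ω
    refine Finset.sum_congr rfl fun i _ => Finset.sum_congr rfl fun j _ => ?_
    congr 1
  rw [hrw, integral_finset_sum _ (fun i _ => integrable_finset_sum _
    (fun j _ => (key i j).1))]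
  have h2 : ∀ i : Fin m, ∫ ω, ∑ j, (∑ k, (∑ s, Φ ω s i * Φ ω s k) * X k j - X i j) ^ 2 ∂μ
      = ∑ j, ((∑ k, X k j ^ 2) + X i j ^ 2) * (q:ℝ)⁻¹ := by
    intro i
    rw [integral_finset_sum _ (fun j _ => (key i j).1)]
    exact Finset.sum_congr rfl fun j _ => (key i j).2
  rw [Finset.sum_congr rfl fun i _ => h2 i]
  simp only [add_mul, Finset.sum_add_distrib, Finset.sum_const, Finset.card_univ,
    Fintype.card_fin, nsmul_eq_mul]
  simp only [← Finset.sum_mul]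
  have hcomm : ∑ j : Fin D, ∑ k : Fin m, X k j ^ 2 = ∑ k : Fin m, ∑ j : Fin D, X k j ^ 2 :=
    Finset.sum_comm
  rw [hcomm]
  field_simp
end

section
/- Let Φ be a q×m matrix that is l-secure, and let Ψ be an l×m matrix each of whose rows is a nonzero linear combination of the rows of Φ, with the l rows of Ψ linearly independent. Then in the linear system y = Ψx, the number of variables x_j that appear with nonzero coefficient in at least one equation is at least 2l, provided 2l ≤ m. -/
open Matrix Finset

/-- A `q × m` real matrix `Φ` is `l`-secure if deleting any `l` columns
leaves a submatrix of full row rank `q`. -/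
def LSecure {q m : ℕ} (Φ : Matrix (Fin q) (Fin m) ℝ) (l : ℕ) : Prop :=
  ∀ s : Finset (Fin m), s.card = l →
    (Φ.submatrix id (fun j : {j : Fin m // j ∉ s} => (j : Fin m))).rank = q

/-- If `Φ` is `l`-secure and `Ψ` is an `l × m` matrix each of
whose rows is a nonzero linear combination of rows of `Φ`, with the rows of
`Ψ` linearly independent and `2l ≤ m`, then at least `2l` variables appear
with nonzero coefficient in the system `y = Ψ x` (i.e. at least `2l` columns
of `Ψ` are nonzero). -/
theorem lsecure_system_involves_2l_variables
    {q m l : ℕ} (Φ : Matrix (Fin q) (Fin m) ℝ) (hΦ : LSecure Φ l)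
    (Ψ : Matrix (Fin l) (Fin m) ℝ)
    (hrows : ∀ i, ∃ c : Fin q → ℝ, c ≠ 0 ∧ ∀ j, Ψ i j = ∑ k, c k * Φ k j)
    (hli : LinearIndependent ℝ (fun i => Ψ i))
    (hlm : 2 * l ≤ m) :
    2 * l ≤ (univ.filter fun j : Fin m => ∃ i, Ψ i j ≠ 0).card := by
  by_contra hcon
  push_neg at hcon
  set S : Finset (Fin m) := univ.filter fun j : Fin m => ∃ i, Ψ i j ≠ 0 with hSdef
  have hl1 : 1 ≤ l := by
    rcases Nat.eq_zero_or_pos l with h | h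
    · subst h; simp at hcon
    · exact h
  -- choose T of card l-1 with (S \ T).card ≤ l
  obtain ⟨T, hTcard, hSTcard⟩ :
      ∃ T : Finset (Fin m), T.card = l - 1 ∧ (S \ T).card ≤ l := by
    by_cases h : S.card ≤ l - 1
    · obtain ⟨T, hsub, hcard⟩ := Finset.exists_superset_card_eq h
        (by simpa using by omega : l - 1 ≤ Fintype.card (Fin m))
      refine ⟨T, hcard, ?_⟩
      rw [Finset.sdiff_eq_empty_iff_subset.2 hsub]
      simp
    · push_neg at h
      obtain ⟨T, hsub, hcard⟩ := Finset.exists_subset_card_eq (le_of_lt h)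
      refine ⟨T, hcard, ?_⟩
      rw [Finset.card_sdiff_of_subset hsub, hcard]
      omega
  -- nontrivial kernel of the restriction-to-T map
  obtain ⟨a, ha0, haT⟩ :
      ∃ a : Fin l → ℝ, a ≠ 0 ∧ ∀ j ∈ T, (Matrix.vecMul a Ψ) j = 0 := by
    let f : (Fin l → ℝ) →ₗ[ℝ] ({x : Fin m // x ∈ T} → ℝ) :=
      (LinearMap.funLeft ℝ ℝ (fun t : {x : Fin m // x ∈ T} => (t : Fin m))).comp
        Ψ.vecMulLinear
    have hrange : Module.finrank ℝ (LinearMap.range f) ≤ l - 1 := by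
      calc Module.finrank ℝ (LinearMap.range f)
          ≤ Module.finrank ℝ ({x : Fin m // x ∈ T} → ℝ) := Submodule.finrank_le _
        _ = T.card := by simp [Module.finrank_pi]
        _ = l - 1 := hTcard
    have hrn := LinearMap.finrank_range_add_finrank_ker f
    have hdom : Module.finrank ℝ (Fin l → ℝ) = l := by simp
    rw [hdom] at hrn
    have hker : LinearMap.ker f ≠ ⊥ := by
      intro h
      rw [h] at hrn
      simp at hrn
      omega
    obtain ⟨a, ha, ha0⟩ := (Submodule.ne_bot_iff _).1 hker
    refine ⟨a, ha0, fun j hj => ?_⟩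
    have := congrFun (LinearMap.mem_ker.1 ha) ⟨j, hj⟩
    simpa [f, Matrix.vecMulLinear_apply] using this
  choose c hc0 hcΨ using hrows
  set d : Fin q → ℝ := fun k => ∑ i, a i * c i k with hddef
  have hdΦ : ∀ j, ∑ k, d k * Φ k j = (Matrix.vecMul a Ψ) j := by
    intro j
    have : (Matrix.vecMul a Ψ) j = ∑ i, a i * Ψ i j := by
      simp [Matrix.vecMul, dotProduct]
    rw [this]
    simp only [hddef, hcΨ, Finset.sum_mul, Finset.mul_sum]
    rw [Finset.sum_comm]
    apply Finset.sum_congr rfl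
    intro i _
    apply Finset.sum_congr rfl
    intro k _
    ring
  have hdne : d ≠ 0 := by
    intro hd
    apply ha0
    have hzero : ∀ j, (Matrix.vecMul a Ψ) j = 0 := by
      intro j
      rw [← hdΦ j, hd]
      simp
    have hsum : ∑ i, a i • (fun j => Ψ i j) = 0 := by
      funext j
      have := hzero j
      simp [Matrix.vecMul, dotProduct] at this
      simpa using this
    have := Fintype.linearIndependent_iff.1 hli a (by simpa using hsum)
    funext i; exact this i
  -- support of a ᵥ* Ψ is inside S \ T
  have hsupp : ∀ j, j ∉ S \ T → (Matrix.vecMul a Ψ) j = 0 := by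
    intro j hj
    rw [Finset.mem_sdiff] at hj
    push_neg at hj
    by_cases hjS : j ∈ S
    · exact haT j (hj hjS)
    · have : ∀ i, Ψ i j = 0 := by
        intro i
        by_contra hne
        exact hjS (by simp [hSdef]; exact ⟨i, hne⟩)
      simp [Matrix.vecMul, dotProduct, this]
  -- extend S \ T to a set s of card l
  obtain ⟨s, hs_sub, hs_card⟩ := Finset.exists_superset_card_eq hSTcard
    (by simpa using by omega : l ≤ Fintype.card (Fin m))
  have hrank := hΦ s hs_card
  set M := Φ.submatrix id (fun j : {j : Fin m // j ∉ s} => (j : Fin m)) with hMdef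
  have hvM : Matrix.vecMul d M = 0 := by
    funext j
    obtain ⟨j, hj⟩ := j
    have hjST : j ∉ S \ T := fun h => hj (hs_sub h)
    have : (Matrix.vecMul d M) ⟨j, hj⟩ = ∑ k, d k * Φ k j := by
      simp [Matrix.vecMul, dotProduct, hMdef]
    rw [this, hdΦ j, hsupp j hjST]
    rfl
  -- rank q implies injectivity of c ↦ c ᵥ* M
  have hrankT : Mᵀ.rank = q := by rw [Matrix.rank_transpose]; exact hrank
  have hkerT : LinearMap.ker Mᵀ.mulVecLin = ⊥ := by
    have hrn := LinearMap.finrank_range_add_finrank_ker Mᵀ.mulVecLin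
    have hdom : Module.finrank ℝ (Fin q → ℝ) = q := by simp
    rw [hdom] at hrn
    have hr : Module.finrank ℝ (LinearMap.range Mᵀ.mulVecLin) = q := hrankT
    rw [hr] at hrn
    have : Module.finrank ℝ (LinearMap.ker Mᵀ.mulVecLin) = 0 := by omega
    exact Submodule.finrank_eq_zero.1 this
  apply hdne
  have : Mᵀ.mulVecLin d = 0 := by
    rw [Matrix.mulVecLin_apply, Matrix.mulVec_transpose, hvM]
  have hd0 : d ∈ LinearMap.ker Mᵀ.mulVecLin := this
  rw [hkerT] at hd0
  simpa using hd0
end
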